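/- Let p be a prime, d ≥ 1, and let v, w ∈ ℤ_p^d with v ∉ pℤ_p^d and w ∉ pℤ_p^d. Let X_v ⊆ ℚ_p^d be the subgroup generated by ℤ_p^d and v/p, and X_w ⊆ ℚ_p^d the subgroup generated by ℤ_p^d and w/p, and let f_v : X_v → ℤ/pℤ (resp. f_w : X_w → ℤ/pℤ) be the unique group homomorphism that is trivial on ℤ_p^d and sends v/p (resp. w/p) to 1. If there exists a group isomorphism φ : X_v → X_w that restricts to the identity on ℤ_p^d and satisfies f_w ∘ φ = f_v, then v ≡ w (mod pℤ_p^d). -/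

import Mathlib

/-- The subgroup `ℤ_p^d` of the additive group `ℚ_p^d`: vectors all of whose
coordinates are `p`-adic integers. -/
noncomputable def Zpd (p : ℕ) [Fact p.Prime] (d : ℕ) : AddSubgroup (Fin d → ℚ_[p]) :=
  AddSubgroup.pi Set.univ fun _ => (PadicInt.subring p).toAddSubgroup

/-- For `v ∈ ℤ_p^d`, the subgroup `X_v` of `ℚ_p^d` generated by `ℤ_p^d` and `v/p`. -/
noncomputable def Xv (p : ℕ) [Fact p.Prime] (d : ℕ) (v : Fin d → ℤ_[p]) :
    AddSubgroup (Fin d → ℚ_[p]) :=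
  Zpd p d ⊔ AddSubgroup.zmultiples (fun i => (v i : ℚ_[p]) / p)

/-!
Write `φ(v/p) = z + k • (w/p)` with `z ∈ ℤ_p^d`. Compatibility with `f_v, f_w` gives
`k ≡ 1 (mod p)`, and multiplying by `p`, which lands in `ℤ_p^d` where `φ` is the identity, gives
`p z + k w = v`. Hence `v - w = p z + (k - 1) w ∈ p ℤ_p^d`.
-/

theorem dvd_sub_of_natCast_mul_add_intCast_mul_eq {R : Type*} [CommRing R] {n : ℕ} {k : ℤ}
    {z v w : R} (h : n * z + k * w = v) (hk : (k : ZMod n) = 1) : (n : R) ∣ v - w := by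
  obtain ⟨m, hm⟩ : (n : ℤ) ∣ k - 1 :=
    (ZMod.intCast_zmod_eq_zero_iff_dvd _ n).mp (by push_cast [hk]; ring)
  refine ⟨z + m * w, ?_⟩
  have hk' : (k : R) = n * m + 1 := by
    rw [show k = n * m + 1 by omega]; push_cast; ring
  rw [← h, hk']
  ring

section

variable {p : ℕ} [Fact p.Prime] {d : ℕ}

theorem mem_Zpd_iff {x : Fin d → ℚ_[p]} :
    x ∈ Zpd p d ↔ ∃ z : Fin d → ℤ_[p], x = fun i => (z i : ℚ_[p]) := by
  constructor
  · intro hx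
    exact ⟨fun i => ⟨x i, hx i (Set.mem_univ i)⟩, rfl⟩
  · rintro ⟨z, rfl⟩ i _
    exact (z i).2

theorem Zpd_le_Xv (v : Fin d → ℤ_[p]) : Zpd p d ≤ Xv p d v :=
  le_sup_left

theorem div_mem_Xv (v : Fin d → ℤ_[p]) : (fun i => (v i : ℚ_[p]) / p) ∈ Xv p d v :=
  le_sup_right (a := Zpd p d) (AddSubgroup.mem_zmultiples _)

theorem exists_eq_add_zsmul_of_mem_Xv {w : Fin d → ℤ_[p]} {y : Fin d → ℚ_[p]}
    (hy : y ∈ Xv p d w) : ∃ (z : Fin d → ℤ_[p]) (k : ℤ),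
      y = (fun i => (z i : ℚ_[p])) + k • fun i => (w i : ℚ_[p]) / p := by
  obtain ⟨x, hx, b, hb, rfl⟩ := AddSubgroup.mem_sup.mp hy
  obtain ⟨z, rfl⟩ := mem_Zpd_iff.mp hx
  obtain ⟨k, rfl⟩ := AddSubgroup.mem_zmultiples_iff.mp hb
  exact ⟨z, k, rfl⟩

theorem natCast_nsmul_div (v : Fin d → ℤ_[p]) :
    p • (fun i => (v i : ℚ_[p]) / p) = fun i => (v i : ℚ_[p]) := by
  have hp : (p : ℚ_[p]) ≠ 0 := Nat.cast_ne_zero.mpr (Fact.out : p.Prime).ne_zero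
  ext i
  simp [nsmul_eq_mul, mul_div_cancel₀ _ hp]

theorem natCast_nsmul_add_zsmul_div (z w : Fin d → ℤ_[p]) (k : ℤ) :
    p • ((fun i => (z i : ℚ_[p])) + k • fun i => (w i : ℚ_[p]) / p) =
      fun i => ((p * z i + k * w i : ℤ_[p]) : ℚ_[p]) := by
  rw [nsmul_add, smul_comm, natCast_nsmul_div]
  ext i
  simp [nsmul_eq_mul, zsmul_eq_mul]

theorem map_eq_zsmul_of_coe_eq_add_zsmul {A : Type*} [AddGroup A] {w : Fin d → ℤ_[p]}
    (f : Xv p d w →+ A) (hf0 : ∀ y : Xv p d w, (y : Fin d → ℚ_[p]) ∈ Zpd p d → f y = 0)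
    {y : Xv p d w} {z : Fin d → ℤ_[p]} {k : ℤ}
    (hy : (y : Fin d → ℚ_[p]) = (fun i => (z i : ℚ_[p])) + k • fun i => (w i : ℚ_[p]) / p) :
    f y = k • f ⟨_, div_mem_Xv w⟩ := by
  have hz : (fun i => (z i : ℚ_[p])) ∈ Zpd p d := mem_Zpd_iff.mpr ⟨z, rfl⟩
  have hsplit : y = ⟨_, Zpd_le_Xv w hz⟩ + k • ⟨_, div_mem_Xv w⟩ := Subtype.ext hy
  rw [hsplit, map_add, map_zsmul, hf0 _ hz, zero_add]

end

theorem equiv_extensions_congr_general (p : ℕ) [Fact p.Prime] (d : ℕ)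
    (v w : Fin d → ℤ_[p])
    (fv : Xv p d v →+ ZMod p) (fw : Xv p d w →+ ZMod p)
    (hfv1 : ∀ x : Xv p d v, (x : Fin d → ℚ_[p]) = (fun i => (v i : ℚ_[p]) / p) → fv x = 1)
    (hfw0 : ∀ y : Xv p d w, (y : Fin d → ℚ_[p]) ∈ Zpd p d → fw y = 0)
    (hfw1 : ∀ y : Xv p d w, (y : Fin d → ℚ_[p]) = (fun i => (w i : ℚ_[p]) / p) → fw y = 1)
    (φ : Xv p d v ≃+ Xv p d w)
    (hφ_id : ∀ x : Xv p d v, (x : Fin d → ℚ_[p]) ∈ Zpd p d →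
      (φ x : Fin d → ℚ_[p]) = (x : Fin d → ℚ_[p]))
    (hφ_comm : ∀ x : Xv p d v, fw (φ x) = fv x) :
    ∀ i, (p : ℤ_[p]) ∣ (v i - w i) := by
  set x : Xv p d v := ⟨_, div_mem_Xv v⟩
  obtain ⟨z, k, hzk⟩ := exists_eq_add_zsmul_of_mem_Xv (φ x).2
  have hk : (k : ZMod p) = 1 := by
    have := map_eq_zsmul_of_coe_eq_add_zsmul fw hfw0 hzk
    rwa [hφ_comm, hfv1 x rfl, hfw1 _ rfl, zsmul_one, eq_comm] at this
  have hpx : ((p • x : Xv p d v) : Fin d → ℚ_[p]) = fun i => (v i : ℚ_[p]) :=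
    natCast_nsmul_div v
  have hpφx : p • (φ x : Fin d → ℚ_[p]) = fun i => (v i : ℚ_[p]) := by
    rw [← hpx, ← hφ_id _ (hpx ▸ mem_Zpd_iff.mpr ⟨v, rfl⟩), map_nsmul, AddSubgroup.coe_nsmul]
  rw [hzk, natCast_nsmul_add_zsmul_div] at hpφx
  exact fun i => dvd_sub_of_natCast_mul_add_intCast_mul_eq
    (PadicInt.ext (congrFun hpφx i)) hk

/-- Let `v, w ∈ ℤ_p^d` with `v, w ∉ pℤ_p^d`, and let `f_v : X_v → ℤ/pℤ` (resp.
`f_w : X_w → ℤ/pℤ`) be the homomorphism vanishing on `ℤ_p^d` and sending `v/p` (resp.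
`w/p`) to `1`. If there is a group isomorphism `φ : X_v ≃ X_w` restricting to the identity
on `ℤ_p^d` with `f_w ∘ φ = f_v`, then `v ≡ w (mod pℤ_p^d)`. -/
theorem equiv_extensions_congr (p : ℕ) [Fact p.Prime] (d : ℕ) (hd : 1 ≤ d)
    (v w : Fin d → ℤ_[p])
    (hv : ¬ ∀ i, (p : ℤ_[p]) ∣ v i) (hw : ¬ ∀ i, (p : ℤ_[p]) ∣ w i)
    (fv : Xv p d v →+ ZMod p) (fw : Xv p d w →+ ZMod p)
    (hfv0 : ∀ x : Xv p d v, (x : Fin d → ℚ_[p]) ∈ Zpd p d → fv x = 0)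
    (hfv1 : ∀ x : Xv p d v, (x : Fin d → ℚ_[p]) = (fun i => (v i : ℚ_[p]) / p) → fv x = 1)
    (hfw0 : ∀ y : Xv p d w, (y : Fin d → ℚ_[p]) ∈ Zpd p d → fw y = 0)
    (hfw1 : ∀ y : Xv p d w, (y : Fin d → ℚ_[p]) = (fun i => (w i : ℚ_[p]) / p) → fw y = 1)
    (φ : Xv p d v ≃+ Xv p d w)
    (hφ_id : ∀ x : Xv p d v, (x : Fin d → ℚ_[p]) ∈ Zpd p d →
      (φ x : Fin d → ℚ_[p]) = (x : Fin d → ℚ_[p]))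
    (hφ_comm : ∀ x : Xv p d v, fw (φ x) = fv x) :
    ∀ i, (p : ℤ_[p]) ∣ (v i - w i) :=
  equiv_extensions_congr_general p d v w fv fw hfv1 hfw0 hfw1 φ hφ_id hφ_comm
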